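/- Let (G, H, (g_v), (c_v), a) be a BNPG game with asymmetric altruism on a connected graph G = (V, E), let T = (V, E₁) be a spanning tree of G, let E'' := E \ E₁, and let V' ⊆ V be the set of endpoints of edges of E''. Let E₂ := {(u,v) ∈ E' : {u,v} ∈ E₁} and, for each v, let N'_v be its out-neighbors in (V, E₂). Fix a profile x* = (x*_v)_{v∈V} ∈ {0,1}^V with G-neighbor counts (n*_v)_{v∈V}, and for v ∈ V' let n^t_v be the number of neighbors of v in (V, E'') playing 1 under x*. Define g^t_v(x) := g_v(x + n^t_v) for v ∈ V' and g^t_v := g_v otherwise; define c^s_v := c_v − a·∑_{u ∈ N_v \ N'_v} Δg_u(x*_u + n*_u − 1) if v ∈ V' and x*_v = 1, c^s_v := c_v − a·∑_{u ∈ N_v \ N'_v} Δg_u(x*_u + n*_u) if v ∈ V' and x*_v = 0, and c^s_v := c_v otherwise. Then x* is a pure strategy Nash equilibrium of (G, H, (g_v), (c_v), a) if and only if x* is a pure strategy Nash equilibrium of (T, (V,E₂), (g^t_v), (c^s_v), a). -/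

import Mathlib

open Finset

/-- `Δg(t) = g(t+1) - g(t)`. -/
def dg (g : ℕ → ℝ) (t : ℕ) : ℝ := g (t + 1) - g t

/-- Number of `G`-neighbors of `v` playing 1 in the profile `x`. -/
def nv {W : Type*} [Fintype W] [DecidableEq W] (G : SimpleGraph W) [DecidableRel G.Adj]
    (x : W → Bool) (v : W) : ℕ :=
  ((G.neighborFinset v).filter (fun u => x u = true)).card

/-- Utility of player `v` in a BNPG game with altruism: input graph `G`,
altruistic (out-)neighborhoods `N`, externality functions `g`, costs `c`,
altruism parameter `a`. -/
def util {W : Type*} [Fintype W] [DecidableEq W] (G : SimpleGraph W) [DecidableRel G.Adj]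
    (N : W → Finset W) (g : W → ℕ → ℝ) (c : W → ℝ) (a : ℝ)
    (x : W → Bool) (v : W) : ℝ :=
  g v ((x v).toNat + nv G x v)
    + a * ∑ u ∈ N v, g u ((x u).toNat + nv G x u)
    - c v * (x v).toNat

/-- Pure strategy Nash equilibrium of a BNPG game with altruism. -/
def isPSNE {W : Type*} [Fintype W] [DecidableEq W] (G : SimpleGraph W) [DecidableRel G.Adj]
    (N : W → Finset W) (g : W → ℕ → ℝ) (c : W → ℝ) (a : ℝ) (x : W → Bool) : Prop :=
  ∀ v : W, ∀ b : Bool,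
    util G N g c a x v ≥ util G N g c a (Function.update x v b) v

/-!
A profile is a PSNE iff no player gains by a unilateral switch, so it suffices that every such
switch changes the switching player's utility by the same amount in both games. In the tree
game the externalities `g^t` freeze the off-tree active neighbours of `x`, so along tree edges
the neighbour counts, and hence all terms, agree with the original game on profiles differing
from `x` only at the switching player `v`. What is lost are the altruistic terms of `v` along
off-tree edges; each changes by `±Δg_u` at the current count when `v` switches, and the
corrected cost `c^s_v` absorbs exactly this change.
-/

section SpanningTreeReduction

open Function

variable {W : Type*} [Fintype W] [DecidableEq W]

lemma nv_update_self (G : SimpleGraph W) [DecidableRel G.Adj] (x : W → Bool) (v : W) (b : Bool) :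
    nv G (update x v b) v = nv G x v := by
  unfold nv
  refine congrArg card (filter_congr fun u hu => ?_)
  rw [update_of_ne (G.ne_of_adj ((G.mem_neighborFinset v u).mp hu)).symm]

lemma nv_update_add_of_adj (G : SimpleGraph W) [DecidableRel G.Adj] (x : W → Bool) {v u : W}
    (b : Bool) (h : G.Adj v u) :
    nv G (update x v b) u + (x v).toNat = nv G x u + b.toNat := by
  have hv : v ∈ G.neighborFinset u := (G.mem_neighborFinset u v).mpr h.symm
  have key : ∀ y : W → Bool, nv G y u
      = (((G.neighborFinset u).erase v).filter (fun w => y w = true)).card + (y v).toNat := by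
    intro y
    unfold nv
    conv_lhs => rw [← insert_erase hv]
    rw [filter_insert]
    cases y v <;> simp [card_insert_of_notMem]
  have hrest : ((G.neighborFinset u).erase v).filter (fun w => update x v b w = true)
      = ((G.neighborFinset u).erase v).filter (fun w => x w = true) :=
    filter_congr fun w hw => by rw [update_of_ne (ne_of_mem_erase hw)]
  rw [key, key x, hrest, update_self]
  omega

/-- The paper's `n^t_v` (which is `0` off `V'`). -/
def offTreeCount (G T : SimpleGraph W) [DecidableRel G.Adj] [DecidableRel T.Adj]
    (x : W → Bool) (v : W) : ℕ :=
  (univ.filter (fun u : W => G.Adj v u ∧ ¬ T.Adj v u ∧ x u = true)).card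

lemma nv_eq_nv_add_offTreeCount {G T : SimpleGraph W} [DecidableRel G.Adj] [DecidableRel T.Adj]
    (hTG : T ≤ G) (x : W → Bool) (v : W) :
    nv G x v = nv T x v + offTreeCount G T x v := by
  unfold nv offTreeCount
  rw [← card_union_of_disjoint]
  · congr 1
    ext u
    simp only [mem_filter, SimpleGraph.mem_neighborFinset, mem_union, mem_univ, true_and]
    by_cases hT : T.Adj v u
    · simp [hT, hTG hT]
    · simp [hT]
  · rw [disjoint_left]
    intro u hu hu'
    simp only [mem_filter, SimpleGraph.mem_neighborFinset, mem_univ, true_and] at hu hu'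
    exact hu'.2.1 hu.1

lemma offTreeCount_update_of_adj (G T : SimpleGraph W) [DecidableRel G.Adj] [DecidableRel T.Adj]
    (x : W → Bool) {v u : W} (b : Bool) (h : T.Adj v u) :
    offTreeCount G T (update x v b) u = offTreeCount G T x u := by
  unfold offTreeCount
  refine congrArg card (filter_congr fun w _ => ?_)
  by_cases hw : w = v
  · subst hw
    simp [h.symm]
  · rw [update_of_ne hw]

/-- Switching `v` from `p` to `q` changes `f (s + n)` into `f (s + n')`; this difference
is the `Δf` term of the paper's cost correction, times `p - q`. -/
lemma sub_eq_dg_mul_toNat_sub (f : ℕ → ℝ) (s n n' : ℕ) (p q : Bool)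
    (h : n' + p.toNat = n + q.toNat) :
    f (s + n) - f (s + n')
      = (if p = true then dg f (s + n - 1) else dg f (s + n)) * ((p.toNat : ℝ) - q.toNat) := by
  cases p <;> cases q <;> simp only [Bool.toNat_true, Bool.toNat_false] at h
  · simp [show n' = n by omega]
  · simp [dg, show n' = n + 1 by omega, ← add_assoc]
  · simp [dg, show n = n' + 1 by omega, ← add_assoc]
  · simp [show n' = n by omega]

variable (G T : SimpleGraph W) [DecidableRel G.Adj] [DecidableRel T.Adj]
  (N : W → Finset W) (g : W → ℕ → ℝ) (c : W → ℝ) (a : ℝ) (x : W → Bool)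

/-- The paper's `N'_v`. -/
def treeAltruism : W → Finset W := fun v => (N v).filter (fun u => T.Adj v u)

/-- The paper's `g^t_v`. -/
def treeExternality : W → ℕ → ℝ := fun v t => g v (t + offTreeCount G T x v)

def costCorrection (v : W) : ℝ :=
  ∑ u ∈ (N v).filter (fun u => ¬ T.Adj v u),
    (if x v = true then dg (g u) ((x u).toNat + nv G x u - 1)
     else dg (g u) ((x u).toNat + nv G x u))

/-- The paper's `c^s_v`. -/
def treeCost : W → ℝ := fun v => c v - a * costCorrection G T N g x v

variable {G T N}

/-- On profiles that differ from `x` at most at `v`, the tree game loses exactly the altruistic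
terms of `v` along off-tree edges, and its cost is shifted by the correction. -/
lemma util_sub_util_tree (hTG : T ≤ G) (hN : ∀ v : W, ∀ u ∈ N v, G.Adj v u) (v : W) (b : Bool) :
    util G N g c a (update x v b) v
        - util T (treeAltruism T N) (treeExternality G T g x) (treeCost G T N g c a x) a
          (update x v b) v
      = a * (∑ u ∈ (N v).filter (fun u => ¬ T.Adj v u),
          g u ((x u).toNat + nv G (update x v b) u) - costCorrection G T N g x v * b.toNat) := by
  have hself : nv T (update x v b) v + offTreeCount G T x v = nv G (update x v b) v := by
    rw [nv_update_self, nv_update_self, nv_eq_nv_add_offTreeCount hTG]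
  have htree : ∀ u ∈ treeAltruism T N v,
      g u ((update x v b u).toNat + nv T (update x v b) u + offTreeCount G T x u)
        = g u ((x u).toNat + nv G (update x v b) u) := by
    intro u hu
    obtain ⟨-, hT⟩ := mem_filter.mp hu
    rw [update_of_ne (T.ne_of_adj hT).symm, add_assoc,
      ← offTreeCount_update_of_adj G T x b hT, ← nv_eq_nv_add_offTreeCount hTG]
  have hall : ∀ u ∈ N v, update x v b u = x u := fun u hu =>
    update_of_ne (G.ne_of_adj (hN v u hu)).symm b x
  unfold util treeExternality treeCost
  rw [add_assoc, hself, sum_congr rfl htree, sum_congr rfl fun u hu => by rw [hall u hu],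
    ← sum_filter_add_sum_filter_not (N v) (fun u => T.Adj v u), update_self]
  unfold treeAltruism
  ring

lemma sum_offTree_sub_eq_costCorrection_mul (hN : ∀ v : W, ∀ u ∈ N v, G.Adj v u)
    (v : W) (b : Bool) :
    ∑ u ∈ (N v).filter (fun u => ¬ T.Adj v u),
        (g u ((x u).toNat + nv G x u) - g u ((x u).toNat + nv G (update x v b) u))
      = costCorrection G T N g x v * ((x v).toNat - b.toNat) := by
  rw [costCorrection, sum_mul]
  refine sum_congr rfl fun u hu => ?_
  exact sub_eq_dg_mul_toNat_sub (g u) _ _ _ _ _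
    (nv_update_add_of_adj G x b (hN v u (mem_filter.mp hu).1))

theorem util_sub_util_update_eq_tree (hTG : T ≤ G) (hN : ∀ v : W, ∀ u ∈ N v, G.Adj v u)
    (v : W) (b : Bool) :
    util G N g c a x v - util G N g c a (update x v b) v
      = util T (treeAltruism T N) (treeExternality G T g x) (treeCost G T N g c a x) a x v
        - util T (treeAltruism T N) (treeExternality G T g x) (treeCost G T N g c a x) a
          (update x v b) v := by
  have hdev := util_sub_util_tree g c a x hTG hN v b
  have hstay := util_sub_util_tree g c a x hTG hN v (x v)
  have hsum := sum_offTree_sub_eq_costCorrection_mul (T := T) g x hN v b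
  rw [update_eq_self] at hstay
  rw [sum_sub_distrib] at hsum
  linear_combination hstay - hdev + a * hsum

end SpanningTreeReduction

theorem statement13_general {W : Type*} [Fintype W] [DecidableEq W]
    (G : SimpleGraph W) [DecidableRel G.Adj]
    (T : SimpleGraph W) [DecidableRel T.Adj] (hTG : T ≤ G)
    (N : W → Finset W) (hN : ∀ v : W, ∀ u ∈ N v, G.Adj v u)
    (g : W → ℕ → ℝ)
    (c : W → ℝ) (a : ℝ)
    (x : W → Bool) :
    isPSNE G N g c a x ↔
      isPSNE T (fun v => (N v).filter (fun u => T.Adj v u))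
        (fun v t => g v (t +
          (Finset.univ.filter (fun u : W => G.Adj v u ∧ ¬ T.Adj v u ∧ x u = true)).card))
        (fun v => c v - a * ∑ u ∈ (N v).filter (fun u => ¬ T.Adj v u),
          (if x v = true then dg (g u) ((x u).toNat + nv G x u - 1)
           else dg (g u) ((x u).toNat + nv G x u)))
        a x := by
  refine forall_congr' fun v => forall_congr' fun b => ?_
  rw [ge_iff_le, ← sub_nonneg, util_sub_util_update_eq_tree g c a x hTG hN v b, sub_nonneg]
  rfl

/-- let `T` be a spanning tree of the connected input network `G`,
let `N` be the (asymmetric) altruistic network, and fix a profile `x`. Replace the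
externality function of each `v` by `g^t_v(t) = g_v(t + n^t_v)` where `n^t_v` is the
number of non-tree `G`-neighbors of `v` playing 1 in `x`; restrict the altruistic
edges to tree edges; and replace the cost of each `v` by
`c_v − a·∑_{u ∈ N_v \ N'_v} Δg_u(x_u + n_u − 1)` if `x_v = 1`, respectively
`c_v − a·∑_{u ∈ N_v \ N'_v} Δg_u(x_u + n_u)` if `x_v = 0`. Then `x` is a PSNE of the
game on `G` iff `x` is a PSNE of the modified game on `T`. -/
theorem statement13 {W : Type*} [Fintype W] [DecidableEq W]
    (G : SimpleGraph W) [DecidableRel G.Adj] (hconn : G.Connected)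
    (T : SimpleGraph W) [DecidableRel T.Adj] (hTG : T ≤ G) (hTree : T.IsTree)
    (N : W → Finset W) (hN : ∀ v : W, ∀ u ∈ N v, G.Adj v u)
    (g : W → ℕ → ℝ) (hmono : ∀ v, Monotone (g v)) (hnn : ∀ v t, 0 ≤ g v t)
    (c : W → ℝ) (hc : ∀ v, 0 ≤ c v) (a : ℝ) (ha : 0 ≤ a)
    (x : W → Bool) :
    isPSNE G N g c a x ↔
      isPSNE T (fun v => (N v).filter (fun u => T.Adj v u))
        (fun v t => g v (t +
          (Finset.univ.filter (fun u : W => G.Adj v u ∧ ¬ T.Adj v u ∧ x u = true)).card))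
        (fun v => c v - a * ∑ u ∈ (N v).filter (fun u => ¬ T.Adj v u),
          (if x v = true then dg (g u) ((x u).toNat + nv G x u - 1)
           else dg (g u) ((x u).toNat + nv G x u)))
        a x :=
  statement13_general G T hTG N hN g c a x
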